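/- Let π ∈ (0,1)^n, V(x) = ∑_{r ∈ {±1}^n} g_π(r) log(g_π(r)/g_x(r)) (the KL divergence from g_π to g_x), and f_i(x) = ∑_{r ∈ {±1}^n} g_π(r) f̃_i(r,x). Then for all x ∈ (0,1)^n and all i ∈ [n], ∂V/∂x_i (x) = − f_i(x)/(x_i(1−x_i)). -/

import Mathlib

open Real Finset

/-- Sign of a Boolean: `true ↦ +1`, `false ↦ -1`. -/
def sg (b : Bool) : ℝ := if b then 1 else -1

/-- Output distribution (cosh form). -/
noncomputable def gc {n : ℕ} (x : Fin n → ℝ) (r : Fin n → ℝ) : ℝ :=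
  Real.cosh ((∑ j, r j * Real.log ((1 - x j) / x j)) / 2) *
    ∏ j, Real.sqrt (x j * (1 - x j))

/-- Update field coordinate (tanh form). -/
noncomputable def ft {n : ℕ} (r x : Fin n → ℝ) (i : Fin n) : ℝ :=
  (1/2) * (1 - Real.tanh ((∑ j, r j * Real.log ((1 - x j) / x j)) / 2) * r i) - x i

/-- KL divergence from `g_p` to `g_x` (sum over the hypercube `{±1}^n`). -/
noncomputable def V {n : ℕ} (p x : Fin n → ℝ) : ℝ :=
  ∑ r : Fin n → Bool, gc p (fun k => sg (r k)) *
    Real.log (gc p (fun k => sg (r k)) / gc x (fun k => sg (r k)))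

/-- Mean-field vector field `f_i(x) = E_{R ∼ g_p}[f̃_i(R,x)]`. -/
noncomputable def fvec {n : ℕ} (p x : Fin n → ℝ) (i : Fin n) : ℝ :=
  ∑ r : Fin n → Bool, gc p (fun k => sg (r k)) * ft (fun k => sg (r k)) x i

/-! Only the `i`-th coordinate moves, and `log g_x(r) = log cosh (⟨r, ℓ_x⟩ / 2) + ∑ⱼ log √(xⱼ(1 - xⱼ))`
is a function of `⟨r, ℓ_x⟩` plus a sum of one-coordinate terms. Since `d/dy log((1 - y)/y) = -1/(y(1 - y))`
and `d/dy log √(y(1 - y)) = (1 - 2y)/(2y(1 - y))`, the chain rule gives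
`∂ᵢ log g_x(r) = f̃ᵢ(r, x)/(xᵢ(1 - xᵢ))`. As `V(x) = const - ∑_r g_π(r) log g_x(r)`, summing against `g_π`
gives the claim. -/

open Function Filter

section update

variable {ι : Type*} [Fintype ι] [DecidableEq ι]

theorem hasDerivAt_sum_apply_update {𝕜 F : Type*} [NontriviallyNormedField 𝕜]
    [NormedAddCommGroup F] [NormedSpace 𝕜 F] (φ : ι → 𝕜 → F) (x : ι → 𝕜) (i : ι) {d : F}
    (h : HasDerivAt (φ i) d (x i)) :
    HasDerivAt (fun t => ∑ j, φ j (update x i t j)) d (x i) := by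
  simp_rw [apply_update φ x i, sum_update_of_mem (mem_univ i)]
  exact h.add_const _

omit [Fintype ι] in
theorem eventually_forall_update_mem {α : Type*} [TopologicalSpace α] {s : Set α}
    (hs : IsOpen s) {x : ι → α} (hx : ∀ j, x j ∈ s) (i : ι) :
    ∀ᶠ t in nhds (x i), ∀ j, update x i t j ∈ s := by
  filter_upwards [hs.mem_nhds (hx i)] with t ht j
  rcases eq_or_ne j i with rfl | hji
  · simpa using ht
  · simpa [hji] using hx j

end update

theorem hasDerivAt_log_one_sub_div {y : ℝ} (hy : y ∈ Set.Ioo 0 1) :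
    HasDerivAt (fun t => log ((1 - t) / t)) (-1 / (y * (1 - y))) y := by
  obtain ⟨hy0, hy1⟩ := hy
  have h1y : 1 - y ≠ 0 := by linarith
  refine ((((hasDerivAt_id' y).const_sub 1).fun_div (hasDerivAt_id' y) hy0.ne').log
    (div_ne_zero h1y hy0.ne')).congr_deriv ?_
  field_simp
  ring

theorem hasDerivAt_log_sqrt_mul_one_sub {y : ℝ} (hy : y ∈ Set.Ioo 0 1) :
    HasDerivAt (fun t => log √(t * (1 - t))) ((1 - 2 * y) / (2 * (y * (1 - y)))) y := by
  obtain ⟨hy0, hy1⟩ := hy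
  have hpos : 0 < y * (1 - y) := mul_pos hy0 (by linarith)
  have hprod : HasDerivAt (fun t => t * (1 - t)) (1 - 2 * y) y :=
    ((hasDerivAt_id' y).fun_mul ((hasDerivAt_id' y).const_sub 1)).congr_deriv (by ring)
  refine ((hprod.sqrt hpos.ne').log (sqrt_pos.2 hpos).ne').congr_deriv ?_
  rw [div_div, mul_assoc, mul_self_sqrt hpos.le]

theorem sqrt_mul_one_sub_pos {y : ℝ} (hy : y ∈ Set.Ioo 0 1) : 0 < √(y * (1 - y)) :=
  sqrt_pos.2 (mul_pos hy.1 (by linarith [hy.2]))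

theorem gc_pos {n : ℕ} {x : Fin n → ℝ} (hx : ∀ j, x j ∈ Set.Ioo 0 1) (r : Fin n → ℝ) :
    0 < gc x r :=
  mul_pos (cosh_pos _) (prod_pos fun j _ => sqrt_mul_one_sub_pos (hx j))

theorem log_gc {n : ℕ} {x : Fin n → ℝ} (hx : ∀ j, x j ∈ Set.Ioo 0 1) (r : Fin n → ℝ) :
    log (gc x r) = log (cosh ((∑ j, r j * log ((1 - x j) / x j)) / 2)) +
      ∑ j, log √(x j * (1 - x j)) := by
  have hsqrt : ∀ j, √(x j * (1 - x j)) ≠ 0 := fun j => (sqrt_mul_one_sub_pos (hx j)).ne'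
  rw [gc, log_mul (cosh_pos _).ne' (prod_ne_zero_iff.2 fun j _ => hsqrt j),
    log_prod fun j _ => hsqrt j]

theorem hasDerivAt_log_gc_update {n : ℕ} {x : Fin n → ℝ} (hx : ∀ j, x j ∈ Set.Ioo 0 1)
    (r : Fin n → ℝ) (i : Fin n) :
    HasDerivAt (fun t => log (gc (update x i t) r)) (ft r x i / (x i * (1 - x i))) (x i) := by
  have hlogit := hasDerivAt_sum_apply_update (fun j y => r j * log ((1 - y) / y)) x i
    ((hasDerivAt_log_one_sub_div (hx i)).const_mul (r i))
  have hsqrt := hasDerivAt_sum_apply_update (fun _ y => log √(y * (1 - y))) x i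
    (hasDerivAt_log_sqrt_mul_one_sub (hx i))
  have hcosh := (hlogit.div_const 2).cosh.log (cosh_pos _).ne'
  simp only [update_eq_self] at hcosh
  refine ((hcosh.add hsqrt).congr_of_eventuallyEq ?_).congr_deriv ?_
  · filter_upwards [eventually_forall_update_mem isOpen_Ioo hx i] with t ht
    exact log_gc ht r
  · have hx0 := (hx i).1.ne'
    have hx1 : 1 - x i ≠ 0 := by linarith [(hx i).2]
    rw [ft, tanh_eq_sinh_div_cosh]
    field_simp
    ring

theorem hasDerivAt_mul_log_div_gc_update {n : ℕ} (c : ℝ) {x : Fin n → ℝ}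
    (hx : ∀ j, x j ∈ Set.Ioo 0 1) (r : Fin n → ℝ) (i : Fin n) :
    HasDerivAt (fun t => c * log (c / gc (update x i t) r))
      (-(c * ft r x i) / (x i * (1 - x i))) (x i) := by
  rcases eq_or_ne c 0 with rfl | hc
  · simpa using hasDerivAt_const (x i) (0 : ℝ)
  refine ((((hasDerivAt_log_gc_update hx r i).const_sub (log c)).const_mul c)
    |>.congr_of_eventuallyEq ?_).congr_deriv (by ring)
  filter_upwards [eventually_forall_update_mem isOpen_Ioo hx i] with t ht
  rw [log_div hc (gc_pos ht r).ne']

theorem stmt5_general (n : ℕ) (p : Fin n → ℝ)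
    (x : Fin n → ℝ) (hx : ∀ i, x i ∈ Set.Ioo (0:ℝ) 1) (i : Fin n) :
    HasDerivAt (fun t => V p (Function.update x i t))
      (-(fvec p x i) / (x i * (1 - x i))) (x i) := by
  have hsum := HasDerivAt.fun_sum (u := univ) fun (r : Fin n → Bool) _ =>
    hasDerivAt_mul_log_div_gc_update (gc p fun k => sg (r k)) hx (fun k => sg (r k)) i
  refine hsum.congr_deriv ?_
  rw [fvec, ← sum_neg_distrib, sum_div]

theorem stmt5 (n : ℕ) (p : Fin n → ℝ) (hp : ∀ i, p i ∈ Set.Ioo (0:ℝ) 1)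
    (x : Fin n → ℝ) (hx : ∀ i, x i ∈ Set.Ioo (0:ℝ) 1) (i : Fin n) :
    HasDerivAt (fun t => V p (Function.update x i t))
      (-(fvec p x i) / (x i * (1 - x i))) (x i) :=
  stmt5_general n p x hx i
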